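/- arXiv:2001.07964 — 3 statements merged into one kernel-verified Lean document; each statement's English description precedes it below -/
import Mathlib

section
/- Consider a congestion game with weighted players: a finite set $N$ of players, a finite set $R$ of resources, each player $i$ choosing a subset $R_{d_i} \subseteq R$ from a finite strategy set, with player-resource weights $q_{i,r} \ge 0$ and resource coefficients $m_r \ge 0$, where player $i$'s cost in profile $d$ is $C_i(d) = \sum_{r \in R_{d_i}} m_r q_{i,r} q_r(d)$ with $q_r(d) = \sum_{j: r \in R_{d_j}} q_{j,r}$. Then the function $\Psi(d) = \sum_{i \in N} \sum_{r \in R_{d_i}} q_{i,r} \, m_r \sum_{j \le i,\; r \in R_{d_j}} q_{j,r}$ (using a fixed linear order on $N$) is an exact potential: for any profile $d$, any player $i$, and any alternative strategy $d_i'$, $\Psi(d_i, d_{-i}) - \Psi(d_i', d_{-i}) = C_i(d_i, d_{-i}) - C_i(d_i', d_{-i})$. -/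
lemma pot_key {N : ℕ} (x : Fin N → ℝ) :
    ∑ i, x i * ∑ j ∈ Finset.univ.filter (fun j => j ≤ i), x j
      = ((∑ i, x i) ^ 2 + ∑ i, (x i) ^ 2) / 2 := by
  have h : ∀ i j : Fin N,
      ((if j ≤ i then x i * x j else 0) + (if i ≤ j then x i * x j else 0))
        = x i * x j + (if i = j then x i * x j else 0) := by
    intro i j
    by_cases hij : i = j
    · subst hij; simp
    · rw [if_neg hij]
      rcases lt_or_gt_of_ne hij with h1 | h1
      · rw [if_neg (not_le.2 h1), if_pos h1.le]; ring
      · rw [if_pos h1.le, if_neg (not_le.2 h1)]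
  have hA : ∑ i, x i * ∑ j ∈ Finset.univ.filter (fun j => j ≤ i), x j
      = ∑ i, ∑ j, if j ≤ i then x i * x j else 0 := by
    simp [Finset.mul_sum, Finset.sum_filter, mul_ite]
  have hB : (∑ i, ∑ j, if j ≤ i then x i * x j else 0)
      = ∑ i, ∑ j, if i ≤ j then x i * x j else 0 := by
    rw [Finset.sum_comm]
    exact Finset.sum_congr rfl fun i _ => Finset.sum_congr rfl fun j _ => by
      rw [mul_comm]
  have hsum : ∀ i : Fin N,
      ((∑ j, if j ≤ i then x i * x j else 0) + ∑ j, if i ≤ j then x i * x j else 0)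
        = x i * (∑ j, x j) + x i * x i := by
    intro i
    rw [← Finset.sum_add_distrib]
    simp_rw [h i]
    rw [Finset.sum_add_distrib, ← Finset.mul_sum]
    congr 1
    simp
  have hC : (∑ i, ∑ j, if j ≤ i then x i * x j else 0)
      + (∑ i, ∑ j, if i ≤ j then x i * x j else 0)
      = (∑ i : Fin N, x i) ^ 2 + ∑ i, (x i) ^ 2 := by
    calc (∑ i, ∑ j, if j ≤ i then x i * x j else 0)
          + (∑ i, ∑ j, if i ≤ j then x i * x j else 0)
        = ∑ i : Fin N, ((∑ j, if j ≤ i then x i * x j else 0)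
            + ∑ j, if i ≤ j then x i * x j else 0) := Finset.sum_add_distrib.symm
      _ = ∑ i : Fin N, (x i * (∑ j, x j) + x i * x i) :=
          Finset.sum_congr rfl fun i _ => hsum i
      _ = (∑ i : Fin N, x i) * (∑ j, x j) + ∑ i : Fin N, x i * x i := by
          rw [Finset.sum_add_distrib, ← Finset.sum_mul]
      _ = (∑ i : Fin N, x i) ^ 2 + ∑ i, (x i) ^ 2 := by
          simp [sq]
  rw [hA]
  linarith [hB, hC]

lemma psi_eq (N : ℕ) (R : Type) [Fintype R] [DecidableEq R]
    (q : Fin N → R → ℝ) (m : R → ℝ) (d : Fin N → Finset R) :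
    (∑ i, ∑ r ∈ d i,
        q i r * m r * ∑ j ∈ Finset.univ.filter (fun j => j ≤ i ∧ r ∈ d j), q j r)
      = ∑ r, m r * (((∑ j, if r ∈ d j then q j r else 0) ^ 2
          + ∑ j, (if r ∈ d j then q j r else 0) ^ 2) / 2) := by
  have h1 : ∀ i : Fin N, (∑ r ∈ d i,
      q i r * m r * ∑ j ∈ Finset.univ.filter (fun j => j ≤ i ∧ r ∈ d j), q j r)
      = ∑ r : R, (if r ∈ d i then
          q i r * m r * ∑ j ∈ Finset.univ.filter (fun j => j ≤ i ∧ r ∈ d j), q j r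
        else 0) := by
    intro i
    rw [Finset.sum_ite_mem, Finset.univ_inter]
  simp_rw [h1]
  rw [Finset.sum_comm]
  refine Finset.sum_congr rfl fun r _ => ?_
  have h2 : ∀ i : Fin N, (if r ∈ d i then
        q i r * m r * ∑ j ∈ Finset.univ.filter (fun j => j ≤ i ∧ r ∈ d j), q j r
      else 0)
      = m r * ((if r ∈ d i then q i r else 0)
          * ∑ j ∈ Finset.univ.filter (fun j => j ≤ i), (if r ∈ d j then q j r else 0)) := by
    intro i
    have hinner : (∑ j ∈ Finset.univ.filter (fun j => j ≤ i ∧ r ∈ d j), q j r)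
        = ∑ j ∈ Finset.univ.filter (fun j => j ≤ i), (if r ∈ d j then q j r else 0) := by
      simp [Finset.sum_filter, ite_and]
    split_ifs with hmem
    · rw [hinner]; ring
    · ring
  simp_rw [h2, ← Finset.mul_sum]
  rw [pot_key (fun j => if r ∈ d j then q j r else 0)]

lemma c_eq (N : ℕ) (R : Type) [Fintype R] [DecidableEq R]
    (q : Fin N → R → ℝ) (m : R → ℝ) (d : Fin N → Finset R) (i : Fin N) :
    (∑ r ∈ d i, m r * q i r * (∑ j, if r ∈ d j then q j r else 0))
      = ∑ r, m r * (if r ∈ d i then q i r else 0)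
          * (∑ j, if r ∈ d j then q j r else 0) := by
  have h1 : (∑ r ∈ d i, m r * q i r * (∑ j, if r ∈ d j then q j r else 0))
      = ∑ r : R, (if r ∈ d i then
          m r * q i r * (∑ j, if r ∈ d j then q j r else 0) else 0) := by
    rw [Finset.sum_ite_mem, Finset.univ_inter]
  rw [h1]
  refine Finset.sum_congr rfl fun r _ => ?_
  split_ifs with hmem
  · ring
  · ring

/-- The weighted congestion game with affine costs admits an exact potential `Ψ`. -/
theorem stmt_5 (N : ℕ) (R : Type) [Fintype R] [DecidableEq R]
    (q : Fin N → R → ℝ) (hq : ∀ i r, 0 ≤ q i r)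
    (m : R → ℝ) (hm : ∀ r, 0 ≤ m r) :
    let qr : R → (Fin N → Finset R) → ℝ :=
      fun r d => ∑ j, if r ∈ d j then q j r else 0
    let C : Fin N → (Fin N → Finset R) → ℝ :=
      fun i d => ∑ r ∈ d i, m r * q i r * qr r d
    let Ψ : (Fin N → Finset R) → ℝ :=
      fun d => ∑ i, ∑ r ∈ d i,
        q i r * m r * ∑ j ∈ Finset.univ.filter (fun j => j ≤ i ∧ r ∈ d j), q j r
    ∀ (d : Fin N → Finset R) (i : Fin N) (d' : Finset R),
      Ψ d - Ψ (Function.update d i d') = C i d - C i (Function.update d i d') := by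
  intro qr C Ψ d i d'
  set e : Fin N → Finset R := Function.update d i d' with he
  show Ψ d - Ψ e = C i d - C i e
  have hΨ : ∀ f : Fin N → Finset R, Ψ f
      = ∑ r, m r * (((∑ j, if r ∈ f j then q j r else 0) ^ 2
          + ∑ j, (if r ∈ f j then q j r else 0) ^ 2) / 2) := fun f => psi_eq N R q m f
  have hC : ∀ f : Fin N → Finset R, C i f
      = ∑ r, m r * (if r ∈ f i then q i r else 0)
          * (∑ j, if r ∈ f j then q j r else 0) := fun f => c_eq N R q m f i
  rw [hΨ d, hΨ e, hC d, hC e, ← Finset.sum_sub_distrib, ← Finset.sum_sub_distrib]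
  refine Finset.sum_congr rfl fun r _ => ?_
  set a : ℝ := if r ∈ d i then q i r else 0 with ha
  set b : ℝ := if r ∈ e i then q i r else 0 with hb
  set S : ℝ := ∑ j, if r ∈ d j then q j r else 0 with hS
  set S' : ℝ := ∑ j, if r ∈ e j then q j r else 0 with hS'
  set Q : ℝ := ∑ j, (if r ∈ d j then q j r else 0) ^ 2 with hQ
  set Q' : ℝ := ∑ j, (if r ∈ e j then q j r else 0) ^ 2 with hQ'
  have hne : ∀ j : Fin N, j ≠ i → e j = d j := fun j hj => Function.update_of_ne hj _ _
  have hSdiff : S' - S = b - a := by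
    rw [hS, hS', ← Finset.sum_sub_distrib]
    rw [Finset.sum_eq_single i]
    · intro j _ hj
      rw [hne j hj]; exact sub_self _
    · intro hmem; exact absurd (Finset.mem_univ i) hmem
  have hQdiff : Q' - Q = b ^ 2 - a ^ 2 := by
    rw [hQ, hQ', ← Finset.sum_sub_distrib]
    rw [Finset.sum_eq_single i]
    · intro j _ hj
      rw [hne j hj]; exact sub_self _
    · intro hmem; exact absurd (Finset.mem_univ i) hmem
  have h1 : S' = S + (b - a) := by linarith
  have h2 : Q' = Q + (b ^ 2 - a ^ 2) := by linarith
  rw [h1, h2]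
  ring
end

section
/- In the weighted congestion game with affine player costs $C_i(d) = \sum_{r \in R_{d_i}} m_r q_{i,r} q_r(d)$ (as above), every sequence of strict unilateral improvement steps is finite, and hence a pure strategy Nash equilibrium exists. -/
/-- In the weighted congestion game with affine costs, every sequence of strict
unilateral improvement steps is finite, hence a pure Nash equilibrium exists. -/
theorem stmt_6 (N : ℕ) (R : Type) [Fintype R] [DecidableEq R]
    (q : Fin N → R → ℝ) (hq : ∀ i r, 0 ≤ q i r)
    (m : R → ℝ) (hm : ∀ r, 0 ≤ m r) :
    let qr : R → (Fin N → Finset R) → ℝ :=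
      fun r d => ∑ j, if r ∈ d j then q j r else 0
    let C : Fin N → (Fin N → Finset R) → ℝ :=
      fun i d => ∑ r ∈ d i, m r * q i r * qr r d
    (¬ ∃ seq : ℕ → (Fin N → Finset R), ∀ t, ∃ i : Fin N,
        (∀ j : Fin N, j ≠ i → seq (t + 1) j = seq t j) ∧
        C i (seq (t + 1)) < C i (seq t)) ∧
    (∃ dstar : Fin N → Finset R, ∀ (i : Fin N) (d' : Finset R),
        C i dstar ≤ C i (Function.update dstar i d')) := by
  intro qr C
  set Φ : (Fin N → Finset R) → ℝ :=
    fun d => ∑ r, m r * ((qr r d)^2 + ∑ j, if r ∈ d j then (q j r)^2 else 0)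
    with hΦdef
  -- rewrite C as a sum over all resources
  have hC : ∀ (i : Fin N) (d : Fin N → Finset R),
      C i d = ∑ r, (if r ∈ d i then m r * q i r * qr r d else 0) := by
    intro i d
    rw [Finset.sum_ite_mem, Finset.univ_inter]
  -- exact potential property
  have key : ∀ (d d' : Fin N → Finset R) (i : Fin N),
      (∀ j, j ≠ i → d' j = d j) →
      Φ d' - Φ d = 2 * (C i d' - C i d) := by
    intro d d' i h
    rw [hC i d, hC i d']
    simp only [hΦdef]
    rw [← Finset.sum_sub_distrib, ← Finset.sum_sub_distrib, Finset.mul_sum]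
    apply Finset.sum_congr rfl
    intro r _
    set A : ℝ := if r ∈ d i then q i r else 0 with hA
    set A' : ℝ := if r ∈ d' i then q i r else 0 with hA'
    set b : ℝ := ∑ j ∈ Finset.univ.erase i, (if r ∈ d j then q j r else 0) with hb
    have hb' : (∑ j ∈ Finset.univ.erase i, (if r ∈ d' j then q j r else 0)) = b := by
      apply Finset.sum_congr rfl
      intro j hj
      rw [h j (Finset.ne_of_mem_erase hj)]
    set T : ℝ := ∑ j ∈ Finset.univ.erase i, (if r ∈ d j then (q j r)^2 else 0) with hT
    have hT' : (∑ j ∈ Finset.univ.erase i, (if r ∈ d' j then (q j r)^2 else 0)) = T := by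
      apply Finset.sum_congr rfl
      intro j hj
      rw [h j (Finset.ne_of_mem_erase hj)]
    have hqr : qr r d = A + b := by
      simp only [qr]
      rw [← Finset.add_sum_erase Finset.univ _ (Finset.mem_univ i)]
    have hqr' : qr r d' = A' + b := by
      simp only [qr]
      rw [← Finset.add_sum_erase Finset.univ _ (Finset.mem_univ i), hb']
    have hsq : (∑ j, if r ∈ d j then (q j r)^2 else 0) = A^2 + T := by
      rw [← Finset.add_sum_erase Finset.univ _ (Finset.mem_univ i)]
      congr 1
      by_cases hri : r ∈ d i <;> simp [hA, hri]
    have hsq' : (∑ j, if r ∈ d' j then (q j r)^2 else 0) = A'^2 + T := by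
      rw [← Finset.add_sum_erase Finset.univ _ (Finset.mem_univ i), hT']
      congr 1
      by_cases hri : r ∈ d' i <;> simp [hA', hri]
    have hc : (if r ∈ d i then m r * q i r * qr r d else 0) = m r * A * (A + b) := by
      by_cases hri : r ∈ d i <;> simp [hA, hri, hqr] <;> ring
    have hc' : (if r ∈ d' i then m r * q i r * qr r d' else 0) = m r * A' * (A' + b) := by
      by_cases hri : r ∈ d' i <;> simp [hA', hri, hqr'] <;> ring
    rw [hsq, hsq', hc, hc', hqr, hqr']
    ring
  constructor
  · rintro ⟨seq, hseq⟩
    have hanti : StrictAnti (fun t => Φ (seq t)) := by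
      apply strictAnti_nat_of_succ_lt
      intro t
      obtain ⟨i, hji, hlt⟩ := hseq t
      have := key (seq t) (seq (t + 1)) i hji
      linarith
    have hinj : Function.Injective (fun t => Φ (seq t)) := hanti.injective
    have hfin : (Set.range (fun t => Φ (seq t))).Finite :=
      Set.Finite.subset (Set.finite_range Φ) (by rintro x ⟨t, rfl⟩; exact ⟨seq t, rfl⟩)
    exact (Set.infinite_range_of_injective hinj) hfin
  · obtain ⟨dstar, -, hmin⟩ :=
      Finset.exists_min_image Finset.univ Φ ⟨fun _ => ∅, Finset.mem_univ _⟩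
    refine ⟨dstar, fun i d' => ?_⟩
    have h1 := hmin (Function.update dstar i d') (Finset.mem_univ _)
    have h2 := key dstar (Function.update dstar i d') i
      (fun j hj => Function.update_of_ne hj _ _)
    linarith
end

section
/- For any partition of a finite index set $I$ with positive weights $v_i$ into groups $G_1, \dots, G_K$, the cost $\sum_k (\sum_{i \in G_k} v_i)^2$ is minimized, over all assignments of items to $K$ groups, by some assignment in which no single item can move to another group and strictly decrease the cost; moreover for any locally optimal assignment $d^*$ (no improving single-item move for the item's own contribution $v_i \sum_{j \in G_{k(i)}} v_j$) and globally optimal assignment $\hat d$, $\sum_k q_k(d^*)^2 \le \frac{3+\sqrt5}{2} \sum_k q_k(\hat d)^2$, where $q_k(d)$ is the total weight assigned to group $k$ in $d$. -/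
/-!
Moving item `i` from its group to `k'` changes the cost by `2 vᵢ (q_{k'} + vᵢ - q_{k(i)})`, so a
global minimiser, which exists since there are finitely many assignments, is locally optimal.
For the bound, write `A = cost d*`, `B = cost d̂` and `S = ∑ₖ qₖ(d̂) qₖ(d*)`. Since
`A = ∑ᵢ vᵢ q_{d*(i)}(d*)`, local optimality tested against the moves `i ↦ d̂(i)` gives
`A ≤ S + ∑ᵢ vᵢ² ≤ S + B`, and Cauchy–Schwarz gives `S² ≤ AB`. Hence `√A ≤ φ √B` with `φ` the
golden ratio, and `φ² = (3 + √5)/2`.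
-/

open Finset Real goldenRatio

theorem le_goldenRatio_sq_mul {a b s : ℝ} (hb : 0 ≤ b) (hs : s ^ 2 ≤ a * b) (ha : a ≤ s + b) :
    a ≤ φ ^ 2 * b := by
  rcases le_or_gt a b with hab | hab
  · exact hab.trans (le_mul_of_one_le_left hb (one_le_pow₀ one_lt_goldenRatio.le))
  have hquad : a ^ 2 - 3 * a * b + b ^ 2 ≤ 0 := by nlinarith
  have hfactor : (a - φ ^ 2 * b) * (a - ψ ^ 2 * b) = a ^ 2 - 3 * a * b + b ^ 2 := by
    linear_combination
      (b ^ 2 * (√5 ^ 2 + 3) / 16 - a * b / 2) * sq_sqrt (show (0 : ℝ) ≤ 5 by norm_num)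
  have hψ : ψ ^ 2 < 1 := by rw [goldenConj_sq]; linarith [goldenConj_neg]
  have hpos : 0 < a - ψ ^ 2 * b := by nlinarith
  exact sub_nonpos.mp (nonpos_of_mul_nonpos_left (hfactor ▸ hquad) hpos)

namespace GroupAssignment

variable {I κ : Type*} [Fintype I] [DecidableEq κ]

def load (v : I → ℝ) (d : I → κ) (k : κ) : ℝ :=
  ∑ i ∈ univ.filter (fun i => d i = k), v i

theorem load_update [DecidableEq I] (v : I → ℝ) (d : I → κ) (i : I) (k' k : κ) :
    load v (Function.update d i k') k =
      load v d k + ((if k' = k then v i else 0) - (if d i = k then v i else 0)) := by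
  rw [← sub_eq_iff_eq_add', load, load, sum_filter, sum_filter, ← sum_sub_distrib,
    sum_eq_single i]
  · simp
  · intro j _ hj
    simp [Function.update_of_ne hj]
  · simp

variable [Fintype κ]

def cost (v : I → ℝ) (d : I → κ) : ℝ :=
  ∑ k, load v d k ^ 2

def IsLocalOpt (v : I → ℝ) (d : I → κ) : Prop :=
  ∀ (i : I) (k' : κ), v i * load v d (d i) ≤ v i * (load v d k' + v i)

theorem sum_mul_load (v : I → ℝ) (d : I → κ) (F : κ → ℝ) :
    ∑ i, v i * F (d i) = ∑ k, load v d k * F k := by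
  rw [← sum_fiberwise univ d]
  refine sum_congr rfl fun k _ => ?_
  rw [load, sum_mul]
  exact sum_congr rfl fun i hi => by rw [(mem_filter.mp hi).2]

theorem cost_eq_sum_mul_load (v : I → ℝ) (d : I → κ) :
    cost v d = ∑ i, v i * load v d (d i) := by
  simp only [cost, sum_mul_load v d (load v d), sq]

theorem cost_update [DecidableEq I] (v : I → ℝ) (d : I → κ) {i : I} {k' : κ} (hk' : k' ≠ d i) :
    cost v (Function.update d i k') =
      cost v d + 2 * v i * (load v d k' + v i - load v d (d i)) := by
  have hsq : ∀ k, load v (Function.update d i k') k ^ 2 = load v d k ^ 2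
      + (if k' = k then 2 * v i * load v d k' + v i ^ 2 else 0)
      + (if d i = k then v i ^ 2 - 2 * v i * load v d (d i) else 0) := by
    intro k
    rw [load_update]
    by_cases h' : k' = k <;> by_cases h : d i = k
    · exact absurd (h'.trans h.symm) hk'
    · subst h'; simp only [↓reduceIte, h]; ring
    · subst h; simp only [↓reduceIte, h']; ring
    · simp only [if_neg h', if_neg h]; ring
  simp only [cost, hsq, sum_add_distrib, sum_ite_eq, mem_univ, if_true]
  ring

theorem isLocalOpt_of_forall_cost_le [DecidableEq I] {v : I → ℝ} {d : I → κ}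
    (hd : ∀ d' : I → κ, cost v d ≤ cost v d') : IsLocalOpt v d := by
  intro i k'
  rcases eq_or_ne k' (d i) with rfl | hk'
  · nlinarith [sq_nonneg (v i)]
  · have := hd (Function.update d i k')
    rw [cost_update v d hk'] at this
    nlinarith

theorem exists_forall_cost_le_and_isLocalOpt [DecidableEq I] [Nonempty κ] (v : I → ℝ) :
    ∃ d : I → κ, (∀ d' : I → κ, cost v d ≤ cost v d') ∧ IsLocalOpt v d := by
  obtain ⟨d, hd⟩ := Finite.exists_min (cost v : (I → κ) → ℝ)
  exact ⟨d, hd, isLocalOpt_of_forall_cost_le hd⟩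

theorem sum_sq_le_cost {v : I → ℝ} (hv : ∀ i, 0 ≤ v i) (d : I → κ) :
    ∑ i, v i ^ 2 ≤ cost v d := by
  rw [cost_eq_sum_mul_load]
  refine sum_le_sum fun i _ => ?_
  rw [sq]
  exact mul_le_mul_of_nonneg_left
    (single_le_sum (fun j _ => hv j) (mem_filter.mpr ⟨mem_univ i, rfl⟩)) (hv i)

theorem IsLocalOpt.cost_le_sum_load_mul_load_add {v : I → ℝ} {d : I → κ} (hd : IsLocalOpt v d)
    (e : I → κ) : cost v d ≤ ∑ k, load v e k * load v d k + ∑ i, v i ^ 2 :=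
  calc cost v d = ∑ i, v i * load v d (d i) := cost_eq_sum_mul_load v d
    _ ≤ ∑ i, v i * (load v d (e i) + v i) := sum_le_sum fun i _ => hd i (e i)
    _ = ∑ k, load v e k * load v d k + ∑ i, v i ^ 2 := by
      simp only [mul_add, sum_add_distrib, sum_mul_load v e (load v d), sq]

theorem IsLocalOpt.cost_le {v : I → ℝ} (hv : ∀ i, 0 ≤ v i) {d : I → κ} (hd : IsLocalOpt v d)
    (e : I → κ) : cost v d ≤ φ ^ 2 * cost v e := by
  refine le_goldenRatio_sq_mul (s := ∑ k, load v e k * load v d k)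
    (sum_nonneg fun k _ => sq_nonneg _) ?_ ?_
  · exact (sum_mul_sq_le_sq_mul_sq univ (load v e) (load v d)).trans_eq (mul_comm _ _)
  · linarith [hd.cost_le_sum_load_mul_load_add e, sum_sq_le_cost hv e]

end GroupAssignment

/-- Single-resource specialization: a locally optimal assignment of weighted items
to `K` groups exists among global minimizers of the sum of squared group weights,
and any locally optimal assignment has cost at most `(3+√5)/2` times the optimum. -/
theorem stmt_18 (I : Type) [Fintype I] [DecidableEq I]
    (v : I → ℝ) (hv : ∀ i, 0 < v i) (K : ℕ) (hK : 0 < K) :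
    let Q : Fin K → (I → Fin K) → ℝ :=
      fun k d => ∑ i ∈ Finset.univ.filter (fun i => d i = k), v i
    let cost : (I → Fin K) → ℝ := fun d => ∑ k, (Q k d) ^ 2
    (∃ d : I → Fin K, (∀ d', cost d ≤ cost d') ∧
      ∀ (i : I) (k' : Fin K), v i * Q (d i) d ≤ v i * (Q k' d + v i)) ∧
    (∀ dstar : I → Fin K,
      (∀ (i : I) (k' : Fin K), v i * Q (dstar i) dstar ≤ v i * (Q k' dstar + v i)) →
      ∀ dhat : I → Fin K, (∀ d', cost dhat ≤ cost d') →
        cost dstar ≤ (3 + Real.sqrt 5) / 2 * cost dhat) := by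
  have : Nonempty (Fin K) := ⟨⟨0, hK⟩⟩
  have hφ : φ ^ 2 = (3 + √5) / 2 := by rw [goldenRatio_sq]; ring
  refine ⟨GroupAssignment.exists_forall_cost_le_and_isLocalOpt v, fun dstar hdstar dhat _ => ?_⟩
  rw [← hφ]
  exact GroupAssignment.IsLocalOpt.cost_le (fun i => (hv i).le) hdstar dhat
end
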